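/- arXiv:2512.09163 — 3 statements merged into one kernel-verified Lean document; each statement's English description precedes it below -/
import Mathlib

section
/- Let η₁, η₂, β₁, β₂ be strictly positive real numbers. If exp(-(t/η₁)^β₁) ≥ exp(-(t/η₂)^β₂) for all t > 0, then β₁ ≤ β₂. -/
open Filter

theorem le_of_forall_rpow_le_mul_rpow {a b C : ℝ}
    (h : ∀ t : ℝ, 0 < t → t ^ a ≤ C * t ^ b) : a ≤ b := by
  by_contra! hba
  obtain ⟨t, hCt, ht⟩ := (((tendsto_rpow_atTop (sub_pos.2 hba)).eventually_gt_atTop C).and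
    (eventually_gt_atTop 0)).exists
  have hbounded : t ^ (a - b) ≤ C := by
    rw [Real.rpow_sub ht, div_le_iff₀ (Real.rpow_pos_of_pos ht b)]
    exact h t ht
  linarith

theorem weibull_survival_ordering_shape_general
    (η₁ η₂ β₁ β₂ : ℝ) (hη₁ : 0 < η₁) (hη₂ : 0 < η₂)
    (h : ∀ t : ℝ, 0 < t →
      Real.exp (-((t / η₁) ^ β₁)) ≥ Real.exp (-((t / η₂) ^ β₂))) :
    β₁ ≤ β₂ := by
  refine le_of_forall_rpow_le_mul_rpow (C := η₁ ^ β₁ / η₂ ^ β₂) fun t ht => ?_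
  have hazard : (t / η₁) ^ β₁ ≤ (t / η₂) ^ β₂ := neg_le_neg_iff.1 (Real.exp_le_exp.1 (h t ht))
  rw [Real.div_rpow ht.le hη₁.le, Real.div_rpow ht.le hη₂.le,
    div_le_iff₀ (Real.rpow_pos_of_pos hη₁ β₁)] at hazard
  calc t ^ β₁ ≤ t ^ β₂ / η₂ ^ β₂ * η₁ ^ β₁ := hazard
    _ = η₁ ^ β₁ / η₂ ^ β₂ * t ^ β₂ := by ring

/-- If two Weibull survival functions are pointwise ordered,
`exp (-(t/η₁)^β₁) ≥ exp (-(t/η₂)^β₂)` for all `t > 0`, then `β₁ ≤ β₂`. -/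
theorem weibull_survival_ordering_shape
    (η₁ η₂ β₁ β₂ : ℝ) (hη₁ : 0 < η₁) (hη₂ : 0 < η₂) (hβ₁ : 0 < β₁) (hβ₂ : 0 < β₂)
    (h : ∀ t : ℝ, 0 < t →
      Real.exp (-((t / η₁) ^ β₁)) ≥ Real.exp (-((t / η₂) ^ β₂))) :
    β₁ ≤ β₂ :=
  weibull_survival_ordering_shape_general η₁ η₂ β₁ β₂ hη₁ hη₂ h
end

section
/- Let η₁, η₂, β₁, β₂ be strictly positive real numbers. If exp(-(t/η₁)^β₁) ≥ exp(-(t/η₂)^β₂) for all t > 0, then the corresponding Weibull means are ordered: η₁ · Γ(1 + 1/β₁) ≥ η₂ · Γ(1 + 1/β₂). -/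
/-! The substitution `u = t / η` turns `∫₀^∞ exp (-(t/η)^β) dt` into `η ∫₀^∞ exp (-u^β) du =
η Γ(1 + 1/β)`, so both means are integrals of the survival functions over `(0, ∞)`, and the
pointwise ordering passes to the integrals. -/

open Real Set MeasureTheory

noncomputable def weibullSurvival (η β t : ℝ) : ℝ := exp (-(t / η) ^ β)

lemma weibullSurvival_eq_comp_mul (η β t : ℝ) :
    weibullSurvival η β t = exp (-(η⁻¹ * t) ^ β) := by
  rw [weibullSurvival, div_eq_inv_mul]

lemma integrableOn_exp_neg_rpow {β : ℝ} (hβ : 0 < β) :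
    IntegrableOn (fun x : ℝ => exp (-x ^ β)) (Ioi 0) := by
  simpa only [rpow_zero, one_mul] using integrableOn_rpow_mul_exp_neg_rpow neg_one_lt_zero hβ

lemma integrableOn_weibullSurvival {η β : ℝ} (hη : 0 < η) (hβ : 0 < β) :
    IntegrableOn (weibullSurvival η β) (Ioi 0) := by
  have := (integrableOn_Ioi_comp_mul_left_iff (fun x : ℝ => exp (-x ^ β)) 0 (inv_pos.2 hη)).2
    (by simpa only [mul_zero] using integrableOn_exp_neg_rpow hβ)
  simpa only [← weibullSurvival_eq_comp_mul] using this

lemma integral_weibullSurvival {η β : ℝ} (hη : 0 < η) (hβ : 0 < β) :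
    ∫ t in Ioi 0, weibullSurvival η β t = η * Gamma (1 + 1 / β) := by
  simp only [weibullSurvival_eq_comp_mul]
  rw [integral_comp_mul_left_Ioi (fun x : ℝ => exp (-x ^ β)) 0 (inv_pos.2 hη), mul_zero,
    integral_exp_neg_rpow hβ, inv_inv, smul_eq_mul, add_comm]

/-- If two Weibull survival functions are pointwise ordered,
`exp (-(t/η₁)^β₁) ≥ exp (-(t/η₂)^β₂)` for all `t > 0`, then the corresponding
Weibull means are ordered: `η₁ * Γ(1 + 1/β₁) ≥ η₂ * Γ(1 + 1/β₂)`. -/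
theorem weibull_survival_ordering_mean
    (η₁ η₂ β₁ β₂ : ℝ) (hη₁ : 0 < η₁) (hη₂ : 0 < η₂) (hβ₁ : 0 < β₁) (hβ₂ : 0 < β₂)
    (h : ∀ t : ℝ, 0 < t →
      Real.exp (-((t / η₁) ^ β₁)) ≥ Real.exp (-((t / η₂) ^ β₂))) :
    η₁ * Real.Gamma (1 + 1 / β₁) ≥ η₂ * Real.Gamma (1 + 1 / β₂) := by
  rw [← integral_weibullSurvival hη₁ hβ₁, ← integral_weibullSurvival hη₂ hβ₂]
  exact setIntegral_mono_on (integrableOn_weibullSurvival hη₂ hβ₂)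
    (integrableOn_weibullSurvival hη₁ hβ₁) measurableSet_Ioi h
end

section
/- Fix L ≥ 1 and layer widths m₀ = d, m₁, …, m_L ≥ 1, and let M ≥ m_ℓ for all 0 ≤ ℓ ≤ L-1. Suppose for each 1 ≤ ℓ ≤ L we are given a real m_ℓ × m_{ℓ-1} matrix W_ℓ with Frobenius norm ‖W_ℓ‖_F ≤ R and a bias b_ℓ ∈ ℝ^{m_ℓ} with ‖b_ℓ‖_∞ ≤ R, where R ≥ 0. Given an input x ∈ ℝ^d, define the layer outputs recursively by h₀ = x and (h_ℓ)_i = log(1 + exp((W_ℓ · h_{ℓ-1} + b_ℓ)_i)). Then ‖h_L‖_∞ ≤ (log 2 + R) · Σ_{k=0}^{L-1} (√M · R)^k + (√M · R)^L · ‖x‖_∞. -/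
noncomputable def frobeniusNorm {m q : ℕ} (W : Matrix (Fin m) (Fin q) ℝ) : ℝ :=
  Real.sqrt (∑ i, ∑ j, (W i j) ^ 2)

/-!
Since `1 + eᵗ ≤ 2 e^|t|`, softplus satisfies `0 ≤ log (1 + eᵗ) ≤ log 2 + |t|`; each coordinate
of `W v` is bounded by Cauchy–Schwarz by `‖W‖_F √q ‖v‖_∞`, where `q ≤ M` is the input width.
Hence `‖h_{ℓ+1}‖_∞ ≤ (log 2 + R) + √M R ‖h_ℓ‖_∞`, and unrolling this affine recursion gives
the bound.
-/

open Finset Matrix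

theorem abs_log_one_add_exp_le (t : ℝ) : |Real.log (1 + Real.exp t)| ≤ Real.log 2 + |t| := by
  have hpos : 0 < 1 + Real.exp t := by positivity
  have hle : 1 + Real.exp t ≤ 2 * Real.exp |t| := by
    linarith [Real.exp_le_exp.2 (le_abs_self t), Real.one_le_exp (abs_nonneg t)]
  rw [abs_of_nonneg (Real.log_nonneg (by linarith [Real.exp_pos t]))]
  calc Real.log (1 + Real.exp t) ≤ Real.log (2 * Real.exp |t|) := Real.log_le_log hpos hle
    _ = Real.log 2 + |t| := by rw [Real.log_mul two_ne_zero (Real.exp_ne_zero _), Real.log_exp]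

theorem sqrt_sum_sq_le_sqrt_card_mul_norm {q : ℕ} (v : Fin q → ℝ) :
    Real.sqrt (∑ j, v j ^ 2) ≤ Real.sqrt q * ‖v‖ := by
  have hsum : ∑ j, v j ^ 2 ≤ q * ‖v‖ ^ 2 := by
    calc ∑ j, v j ^ 2 ≤ ∑ _j : Fin q, ‖v‖ ^ 2 :=
          sum_le_sum fun j _ => by
            simpa only [Real.norm_eq_abs, sq_abs] using
              pow_le_pow_left₀ (norm_nonneg _) (norm_le_pi_norm v j) 2
      _ = q * ‖v‖ ^ 2 := by simp
  calc Real.sqrt (∑ j, v j ^ 2) ≤ Real.sqrt (q * ‖v‖ ^ 2) := Real.sqrt_le_sqrt hsum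
    _ = Real.sqrt q * ‖v‖ := by
        rw [Real.sqrt_mul (Nat.cast_nonneg q), Real.sqrt_sq (norm_nonneg v)]

theorem frobeniusNorm_nonneg {m q : ℕ} (W : Matrix (Fin m) (Fin q) ℝ) : 0 ≤ frobeniusNorm W :=
  Real.sqrt_nonneg _

theorem sqrt_sum_row_sq_le_frobeniusNorm {m q : ℕ} (W : Matrix (Fin m) (Fin q) ℝ) (i : Fin m) :
    Real.sqrt (∑ j, W i j ^ 2) ≤ frobeniusNorm W :=
  Real.sqrt_le_sqrt <| single_le_sum (f := fun i => ∑ j, W i j ^ 2)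
    (fun _ _ => sum_nonneg fun _ _ => sq_nonneg _) (mem_univ i)

theorem abs_mulVec_apply_le {m q : ℕ} (W : Matrix (Fin m) (Fin q) ℝ) (v : Fin q → ℝ)
    (i : Fin m) : |(W *ᵥ v) i| ≤ frobeniusNorm W * Real.sqrt q * ‖v‖ := by
  calc |(W *ᵥ v) i| ≤ ∑ j, |W i j| * |v j| := by
        simpa only [mulVec, dotProduct, abs_mul] using
          abs_sum_le_sum_abs (fun j => W i j * v j) univ
    _ ≤ Real.sqrt (∑ j, W i j ^ 2) * Real.sqrt (∑ j, v j ^ 2) := by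
        simpa only [sq_abs] using Real.sum_mul_le_sqrt_mul_sqrt _ (|W i ·|) (|v ·|)
    _ ≤ frobeniusNorm W * (Real.sqrt q * ‖v‖) :=
        mul_le_mul (sqrt_sum_row_sq_le_frobeniusNorm W i) (sqrt_sum_sq_le_sqrt_card_mul_norm v)
          (Real.sqrt_nonneg _) (frobeniusNorm_nonneg W)
    _ = frobeniusNorm W * Real.sqrt q * ‖v‖ := (mul_assoc _ _ _).symm

theorem norm_softplus_affine_le {m q : ℕ} (W : Matrix (Fin m) (Fin q) ℝ) (b : Fin m → ℝ)
    (v : Fin q → ℝ) :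
    ‖fun i => Real.log (1 + Real.exp ((W *ᵥ v + b) i))‖ ≤
      Real.log 2 + ‖b‖ + frobeniusNorm W * Real.sqrt q * ‖v‖ := by
  refine (pi_norm_le_iff_of_nonneg ?_).2 fun i => ?_
  · have := Real.log_nonneg one_le_two
    have := frobeniusNorm_nonneg W
    positivity
  calc ‖Real.log (1 + Real.exp ((W *ᵥ v + b) i))‖ ≤ Real.log 2 + |(W *ᵥ v + b) i| :=
        abs_log_one_add_exp_le _
    _ ≤ Real.log 2 + (|(W *ᵥ v) i| + |b i|) := by
        gcongr
        exact abs_add_le _ _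
    _ ≤ Real.log 2 + (frobeniusNorm W * Real.sqrt q * ‖v‖ + ‖b‖) := by
        gcongr
        · exact abs_mulVec_apply_le W v i
        · exact norm_le_pi_norm b i
    _ = Real.log 2 + ‖b‖ + frobeniusNorm W * Real.sqrt q * ‖v‖ := by ring

theorem le_geom_sum_of_le_add_mul {a : ℕ → ℝ} {A c : ℝ} (hc : 0 ≤ c) {N : ℕ}
    (hstep : ∀ n < N, a (n + 1) ≤ A + c * a n) :
    ∀ n ≤ N, a n ≤ A * ∑ k ∈ range n, c ^ k + c ^ n * a 0 := by
  intro n hn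
  induction n with
  | zero => simp
  | succ n ih =>
    calc a (n + 1) ≤ A + c * a n := hstep n hn
      _ ≤ A + c * (A * ∑ k ∈ range n, c ^ k + c ^ n * a 0) := by
          gcongr
          exact ih (by omega)
      _ = A * ∑ k ∈ range (n + 1), c ^ k + c ^ (n + 1) * a 0 := by
          rw [geom_sum_succ]
          ring

theorem mlp_softplus_output_bound_general
    (L : ℕ) (mw : ℕ → ℕ)
    (M : ℕ) (hM : ∀ ℓ, ℓ ≤ L - 1 → mw ℓ ≤ M)
    (R : ℝ) (hR : 0 ≤ R)
    (W : ∀ ℓ : ℕ, Matrix (Fin (mw ℓ)) (Fin (mw (ℓ - 1))) ℝ)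
    (b : ∀ ℓ : ℕ, Fin (mw ℓ) → ℝ)
    (hW : ∀ ℓ, 1 ≤ ℓ → ℓ ≤ L → frobeniusNorm (W ℓ) ≤ R)
    (hb : ∀ ℓ, 1 ≤ ℓ → ℓ ≤ L → ‖b ℓ‖ ≤ R)
    (x : Fin (mw 0) → ℝ)
    (h : ∀ ℓ : ℕ, Fin (mw ℓ) → ℝ)
    (hh0 : h 0 = x)
    (hrec : ∀ ℓ, 1 ≤ ℓ → ℓ ≤ L → ∀ i,
      h ℓ i = Real.log (1 + Real.exp (((W ℓ).mulVec (h (ℓ - 1)) + b ℓ) i))) :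
    ‖h L‖ ≤ (Real.log 2 + R) * ∑ k ∈ Finset.range L, (Real.sqrt M * R) ^ k +
      (Real.sqrt M * R) ^ L * ‖x‖ := by
  have hstep : ∀ n < L, ‖h (n + 1)‖ ≤ (Real.log 2 + R) + Real.sqrt M * R * ‖h n‖ := by
    intro n hn
    have hlayer :
        h (n + 1) = fun i => Real.log (1 + Real.exp ((W (n + 1) *ᵥ h n + b (n + 1)) i)) :=
      funext (hrec (n + 1) (by omega) hn)
    have hwidth : Real.sqrt (mw n) ≤ Real.sqrt M :=
      Real.sqrt_le_sqrt (by exact_mod_cast hM n (by omega))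
    calc ‖h (n + 1)‖
        ≤ Real.log 2 + ‖b (n + 1)‖ + frobeniusNorm (W (n + 1)) * Real.sqrt (mw n) * ‖h n‖ :=
          hlayer ▸ norm_softplus_affine_le _ _ _
      _ ≤ Real.log 2 + R + R * Real.sqrt M * ‖h n‖ := by
          gcongr
          · exact hb _ (by omega) hn
          · exact hW _ (by omega) hn
      _ = Real.log 2 + R + Real.sqrt M * R * ‖h n‖ := by ring
  simpa only [hh0] using
    le_geom_sum_of_le_add_mul (a := fun n => ‖h n‖) (mul_nonneg (Real.sqrt_nonneg _) hR) hstep L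
      le_rfl

/-- Proposition 2 (uniform upper bound for a softplus MLP): if every layer has
Frobenius-norm-bounded weights and sup-norm-bounded biases (by `R`), and all
hidden widths `m₀, …, m_{L-1}` are at most `M`, then the sup norm of the output
of the `L`-layer softplus network started at input `x` satisfies
`‖h_L‖_∞ ≤ (log 2 + R) Σ_{k=0}^{L-1} (√M R)^k + (√M R)^L ‖x‖_∞`. -/
theorem mlp_softplus_output_bound
    (L : ℕ) (hL : 1 ≤ L) (mw : ℕ → ℕ) (hmw : ∀ ℓ, ℓ ≤ L → 1 ≤ mw ℓ)
    (M : ℕ) (hM : ∀ ℓ, ℓ ≤ L - 1 → mw ℓ ≤ M)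
    (R : ℝ) (hR : 0 ≤ R)
    (W : ∀ ℓ : ℕ, Matrix (Fin (mw ℓ)) (Fin (mw (ℓ - 1))) ℝ)
    (b : ∀ ℓ : ℕ, Fin (mw ℓ) → ℝ)
    (hW : ∀ ℓ, 1 ≤ ℓ → ℓ ≤ L → frobeniusNorm (W ℓ) ≤ R)
    (hb : ∀ ℓ, 1 ≤ ℓ → ℓ ≤ L → ‖b ℓ‖ ≤ R)
    (x : Fin (mw 0) → ℝ)
    (h : ∀ ℓ : ℕ, Fin (mw ℓ) → ℝ)
    (hh0 : h 0 = x)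
    (hrec : ∀ ℓ, 1 ≤ ℓ → ℓ ≤ L → ∀ i,
      h ℓ i = Real.log (1 + Real.exp (((W ℓ).mulVec (h (ℓ - 1)) + b ℓ) i))) :
    ‖h L‖ ≤ (Real.log 2 + R) * ∑ k ∈ Finset.range L, (Real.sqrt M * R) ^ k +
      (Real.sqrt M * R) ^ L * ‖x‖ :=
  mlp_softplus_output_bound_general L mw M hM R hR W b hW hb x h hh0 hrec
end
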